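/- arXiv:2301.09803 — 3 statements merged into one kernel-verified Lean document; each statement's English description precedes it below -/
import Mathlib

section
/- Under the standing assumptions on φ and φ_λ, fix p ∈ [0,1] and define M(p) := {x ∈ H : φ(x) ≥ p} and, for λ > 0, M_λ(p) := {x ∈ H : φ_λ(x) ≥ p}. Then: (a) for every sequence λ_k → 0⁺, the sets M_{λ_k}(p) converge to M(p) in the Painlevé–Kuratowski sense, i.e. M(p) ⊆ M_{λ_k}(p) for every k (so every point of M(p) is a strong limit of points of M_{λ_k}(p)), and whenever x_k ∈ M_{λ_k}(p) converges strongly to x, then x ∈ M(p); (b) if moreover h is sequentially weakly continuous on H, the convergence holds in the Mosco sense: whenever x_k ∈ M_{λ_k}(p) converges weakly to x, then x ∈ M(p). (Proposition 5.1.) -/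
open Filter Topology MeasureTheory

/-!
The function `S` is convex, and continuous because it is dominated by the continuous function
`M ‖Φ‖ + h`, where `M` bounds the weak*-compact set `C` in norm (uniform boundedness principle):
a convex function that is locally bounded above is continuous. Hence `S` has a continuous affine
minorant, and its Moreau envelopes `M_λ S` are finite, convex, continuous, below `S`, decreasing
in `λ`, and tend to `S` as `λ → 0⁺`. The inclusion `M(p) ⊆ M_λ(p)` is `M_λ S ≤ S`. For the limit
statement, the events `A_k = {M_{λ_k} S (x_k, ξ) ≤ h (x_k)}` have probability at least `p`, hence
so does `limsup A_k`. For `ω` in it and fixed `μ > 0`, `(x_k, ξ ω)` lies frequently in the closed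
convex sublevel set `{M_μ S ≤ r}` for any `r > h x₀`, which is weakly closed, so
`M_μ S (x₀, ξ ω) ≤ h x₀`; letting `μ → 0⁺` gives `S (x₀, ξ ω) ≤ h x₀`. Strong convergence is weak
convergence along which `h (x_k) → h x₀` by continuity of `h`.
-/

/-- The Moreau envelope of a function `S : H × E → ℝ` (in two arguments) with parameter
`lam`, for the Hilbert norm of the product. -/
noncomputable def moreauEnv2 {H E : Type*} [NormedAddCommGroup H] [InnerProductSpace ℝ H]
    [NormedAddCommGroup E] [InnerProductSpace ℝ E]
    (S : H → E → ℝ) (lam : ℝ) (x : H) (z : E) : ℝ :=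
  ⨅ u : H × E, (S u.1 u.2 + (‖x - u.1‖ ^ 2 + ‖z - u.2‖ ^ 2) / (2 * lam))

/-- Weak (sequential) convergence in a Hilbert space: `⟪x_k, y⟫ → ⟪x₀, y⟫` for every `y`. -/
def WeakSeqTendsto {H : Type*} [NormedAddCommGroup H] [InnerProductSpace ℝ H]
    (x : ℕ → H) (x₀ : H) : Prop :=
  ∀ y : H, Tendsto (fun k => (inner ℝ (x k) y : ℝ)) atTop (𝓝 (inner ℝ x₀ y))

open Set

lemma convexOn_ciSup {X ι : Type*} [AddCommMonoid X] [Module ℝ X] [Nonempty ι]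
    {s : Set X} {f : ι → X → ℝ} (hf : ∀ i, ConvexOn ℝ s (f i))
    (hbdd : ∀ x ∈ s, BddAbove (range fun i => f i x)) (hs : Convex ℝ s) :
    ConvexOn ℝ s fun x => ⨆ i, f i x := by
  refine ⟨hs, fun x hx y hy a b ha hb hab => ciSup_le fun i => ?_⟩
  calc f i (a • x + b • y) ≤ a • f i x + b • f i y := (hf i).2 hx hy ha hb hab
    _ ≤ a • (⨆ i, f i x) + b • ⨆ i, f i y := by
      gcongr
      exacts [le_ciSup (hbdd x hx) i, le_ciSup (hbdd y hy) i]

lemma ConvexOn.ciInf_right {X U : Type*} [AddCommGroup X] [Module ℝ X] [AddCommGroup U]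
    [Module ℝ U] [Nonempty U] {F : X × U → ℝ} (hF : ConvexOn ℝ univ F)
    (hbdd : ∀ x, BddBelow (range fun u => F (x, u))) :
    ConvexOn ℝ univ fun x => ⨅ u, F (x, u) := by
  refine ⟨convex_univ, fun x _ y _ a b ha hb hab => le_of_forall_pos_le_add fun ε hε => ?_⟩
  obtain ⟨u, hu⟩ := exists_lt_of_ciInf_lt (lt_add_of_pos_right (⨅ u, F (x, u)) hε)
  obtain ⟨v, hv⟩ := exists_lt_of_ciInf_lt (lt_add_of_pos_right (⨅ u, F (y, u)) hε)
  calc ⨅ w, F (a • x + b • y, w) ≤ F (a • (x, u) + b • (y, v)) := ciInf_le (hbdd _) _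
    _ ≤ a • F (x, u) + b • F (y, v) := hF.2 trivial trivial ha hb hab
    _ ≤ a • ((⨅ u, F (x, u)) + ε) + b • ((⨅ u, F (y, u)) + ε) := by gcongr
    _ = a • (⨅ u, F (x, u)) + b • (⨅ u, F (y, u)) + ε := by
      simp only [smul_eq_mul]; linear_combination ε * hab

lemma ConvexOn.continuous_of_le {X : Type*} [NormedAddCommGroup X] [NormedSpace ℝ X]
    {f g : X → ℝ} (hf : ConvexOn ℝ univ f) (hg : Continuous g) (hfg : ∀ x, f x ≤ g x) :
    Continuous f := by
  refine continuousOn_univ.1 <| ((hf.continuousOn_tfae isOpen_univ univ_nonempty).out 4 1).1 ?_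
  intro x _
  exact isBoundedUnder_of_eventually_le <|
    (hg.continuousAt.eventually (eventually_le_nhds (lt_add_one (g x)))).mono
      fun y hy => (hfg y).trans hy

lemma ConvexOn.exists_affine_le {X : Type*} [NormedAddCommGroup X] [NormedSpace ℝ X]
    {f : X → ℝ} (hf : ConvexOn ℝ univ f) (hfc : Continuous f) :
    ∃ (l : StrongDual ℝ X) (c : ℝ), ∀ u, l u + c ≤ f u := by
  obtain ⟨l, c, hlc, -⟩ := hf.exists_affine_le_of_lt (𝕜 := ℝ) (mem_univ 0)
    (sub_one_lt (f 0)) isClosed_univ (hfc.lowerSemicontinuous.lowerSemicontinuousOn univ)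
  exact ⟨l, c, fun u => by simpa using hlc ⟨u, mem_univ u⟩⟩

lemma WeakSeqTendsto.mem_of_frequently_mem {H : Type*} [NormedAddCommGroup H]
    [InnerProductSpace ℝ H] [CompleteSpace H] {x : ℕ → H} {x₀ : H} (hx : WeakSeqTendsto x x₀)
    {A : Set H} (hAc : Convex ℝ A) (hAcl : IsClosed A) (hfreq : ∃ᶠ k in atTop, x k ∈ A) :
    x₀ ∈ A := by
  by_contra hx₀
  obtain ⟨f, r, hfA, hfx₀⟩ := geometric_hahn_banach_closed_point hAc hAcl hx₀
  obtain ⟨v, rfl⟩ := (InnerProductSpace.toDual ℝ H).surjective f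
  have hlim : Tendsto (fun k => inner ℝ v (x k)) atTop (𝓝 (inner ℝ v x₀)) := by
    simpa only [real_inner_comm v] using hx v
  obtain ⟨k, hkA, hk⟩ := (hfreq.and_eventually (hlim.eventually (eventually_gt_nhds hfx₀))).exists
  exact (hfA _ hkA).not_gt hk

lemma WeakSeqTendsto.toLp_prod_const {H E : Type*} [NormedAddCommGroup H]
    [InnerProductSpace ℝ H] [NormedAddCommGroup E] [InnerProductSpace ℝ E]
    {x : ℕ → H} {x₀ : H} (hx : WeakSeqTendsto x x₀) (z : E) :
    WeakSeqTendsto (fun k => WithLp.toLp 2 (x k, z)) (WithLp.toLp 2 (x₀, z)) :=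
  fun y => by simpa only [WithLp.prod_inner_apply] using (hx (WithLp.ofLp y).1).add_const _

lemma ConvexOn.le_of_weakSeqTendsto {H : Type*} [NormedAddCommGroup H]
    [InnerProductSpace ℝ H] [CompleteSpace H] {F : H → ℝ} (hF : ConvexOn ℝ univ F)
    (hFc : Continuous F) {x : ℕ → H} {x₀ : H} (hx : WeakSeqTendsto x x₀) {b : ℕ → ℝ} {b₀ : ℝ}
    (hb : Tendsto b atTop (𝓝 b₀)) (hfreq : ∃ᶠ k in atTop, F (x k) ≤ b k) : F x₀ ≤ b₀ := by
  refine le_of_forall_gt_imp_ge_of_dense fun r hr => ?_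
  refine hx.mem_of_frequently_mem (A := {y | F y ≤ r}) (by simpa using hF.convex_le r)
    (isClosed_le hFc continuous_const) ?_
  exact (hfreq.and_eventually (hb.eventually (eventually_le_nhds hr))).mono
    fun k hk => hk.1.trans hk.2

lemma le_measure_limsup_atTop {Ω : Type*} [MeasurableSpace Ω] {μ : Measure Ω} [IsFiniteMeasure μ]
    {s : ℕ → Set Ω} (hs : ∀ n, MeasurableSet (s n)) {a : ENNReal} (ha : ∀ n, a ≤ μ (s n)) :
    a ≤ μ (limsup s atTop) := by
  rw [limsup_eq_iInf_iSup_of_nat]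
  have hanti : Antitone fun n => ⋃ i ≥ n, s i :=
    fun m n hmn => biUnion_mono (fun i hi => hmn.trans hi) fun _ _ => le_rfl
  refine ge_of_tendsto (tendsto_measure_iInter_atTop
    (fun n => (MeasurableSet.biUnion (to_countable _) fun i _ => hs i).nullMeasurableSet)
    hanti ⟨0, measure_ne_top μ _⟩) (Eventually.of_forall fun n => ?_)
  exact (ha n).trans (measure_mono (subset_biUnion_of_mem (u := s) (le_refl n)))

noncomputable def moreauEnvelope {X : Type*} [SeminormedAddCommGroup X] (f : X → ℝ) (lam : ℝ)
    (x : X) : ℝ :=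
  ⨅ u, f u + ‖x - u‖ ^ 2 / (2 * lam)

section MoreauEnvelope

variable {X : Type*} [NormedAddCommGroup X] [NormedSpace ℝ X] {f : X → ℝ}
  {l : StrongDual ℝ X} {c lam : ℝ}

lemma moreauEnvelope_bddBelow (hlc : ∀ u, l u + c ≤ f u) (hlam : 0 < lam) (x : X) :
    BddBelow (range fun u => f u + ‖x - u‖ ^ 2 / (2 * lam)) := by
  refine ⟨l x + c - lam * ‖l‖ ^ 2 / 2, forall_mem_range.2 fun u => ?_⟩
  have hlu := (le_abs_self _).trans (l.le_opNorm (x - u))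
  rw [map_sub] at hlu
  have hamgm : ‖l‖ * ‖x - u‖ ≤ lam * ‖l‖ ^ 2 / 2 + ‖x - u‖ ^ 2 / (2 * lam) := by
    rw [div_add_div _ _ two_ne_zero (by positivity), le_div_iff₀ (by positivity)]
    nlinarith [sq_nonneg (lam * ‖l‖ - ‖x - u‖)]
  linarith [hlc u]

lemma moreauEnvelope_le_self (hlc : ∀ u, l u + c ≤ f u) (hlam : 0 < lam) (x : X) :
    moreauEnvelope f lam x ≤ f x := by
  simpa [moreauEnvelope] using ciInf_le (moreauEnvelope_bddBelow hlc hlam x) x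

lemma moreauEnvelope_anti (hlc : ∀ u, l u + c ≤ f u) {lam₁ lam₂ : ℝ} (hlam₁ : 0 < lam₁)
    (h : lam₁ ≤ lam₂) (x : X) : moreauEnvelope f lam₂ x ≤ moreauEnvelope f lam₁ x :=
  ciInf_mono (moreauEnvelope_bddBelow hlc (hlam₁.trans_le h) x) fun u => by gcongr

lemma moreauEnvelope_convexOn (hf : ConvexOn ℝ univ f) (hlc : ∀ u, l u + c ≤ f u)
    (hlam : 0 < lam) : ConvexOn ℝ univ (moreauEnvelope f lam) := by
  have hsq : ConvexOn ℝ univ fun w : X × X => ‖w.1 - w.2‖ ^ 2 :=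
    (convexOn_univ_norm.pow (fun _ _ => norm_nonneg _) 2).comp_linearMap
      (LinearMap.fst ℝ X X - LinearMap.snd ℝ X X)
  have hF : ConvexOn ℝ univ fun w : X × X => f w.2 + ‖w.1 - w.2‖ ^ 2 / (2 * lam) := by
    have hf₂ : ConvexOn ℝ univ fun w : X × X => f w.2 := hf.comp_linearMap (LinearMap.snd ℝ X X)
    refine hf₂.add ?_
    simpa only [div_eq_inv_mul, smul_eq_mul] using hsq.smul (by positivity : 0 ≤ (2 * lam)⁻¹)
  exact hF.ciInf_right (moreauEnvelope_bddBelow hlc hlam)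

lemma moreauEnvelope_continuous (hf : ConvexOn ℝ univ f) (hfc : Continuous f)
    (hlc : ∀ u, l u + c ≤ f u) (hlam : 0 < lam) : Continuous (moreauEnvelope f lam) :=
  (moreauEnvelope_convexOn hf hlc hlam).continuous_of_le hfc (moreauEnvelope_le_self hlc hlam)

lemma eventually_lt_moreauEnvelope {x : X} (hfc : ContinuousAt f x) (hlc : ∀ u, l u + c ≤ f u)
    {a : ℝ} (ha : a < f x) : ∀ᶠ lam in 𝓝[>] 0, a < moreauEnvelope f lam x := by
  obtain ⟨a', haa', ha'⟩ := exists_between ha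
  obtain ⟨δ, hδ, hnear⟩ := Metric.eventually_nhds_iff.1 (hfc.eventually (lt_mem_nhds ha'))
  -- far from `x`, the quadratic term beats the affine minorant once `lam < δ ^ 2 / (2 * D)`
  set D := |a' - l x - c| + ‖l‖ * δ + 1
  have hD : 0 < D := by positivity
  filter_upwards [Ioo_mem_nhdsGT (by positivity : 0 < δ ^ 2 / (2 * D))] with lam hlam
  refine haa'.trans_le (le_ciInf fun u => ?_)
  rcases lt_or_ge ‖x - u‖ δ with hu | hu
  · have := hnear (by rwa [dist_comm, dist_eq_norm] : dist u x < δ)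
    linarith [div_nonneg (sq_nonneg ‖x - u‖) (by linarith [hlam.1] : 0 ≤ 2 * lam)]
  · have hlu := (le_abs_self _).trans (l.le_opNorm (x - u))
    rw [map_sub] at hlu
    have hlamD : 2 * lam * D < δ ^ 2 := by
      have := hlam.2
      rw [lt_div_iff₀ (by positivity)] at this
      linarith
    have hquad : D * ‖x - u‖ / δ ≤ ‖x - u‖ ^ 2 / (2 * lam) := by
      have hδu : 2 * lam * D ≤ δ * ‖x - u‖ := by nlinarith
      rw [div_le_div_iff₀ hδ (by linarith [hlam.1])]
      nlinarith [mul_le_mul_of_nonneg_left hδu (norm_nonneg (x - u))]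
    have hlin : |a' - l x - c| + ‖l‖ * ‖x - u‖ + 1 ≤ D * ‖x - u‖ / δ := by
      rw [le_div_iff₀ hδ]
      nlinarith [abs_nonneg (a' - l x - c), norm_nonneg l]
    linarith [hlc u, le_abs_self (a' - l x - c)]

lemma tendsto_moreauEnvelope {x : X} (hfc : ContinuousAt f x) (hlc : ∀ u, l u + c ≤ f u) :
    Tendsto (fun lam => moreauEnvelope f lam x) (𝓝[>] 0) (𝓝 (f x)) := by
  refine tendsto_order.2 ⟨fun a ha => eventually_lt_moreauEnvelope hfc hlc ha, fun b hb => ?_⟩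
  filter_upwards [self_mem_nhdsWithin] with lam hlam
  exact (moreauEnvelope_le_self hlc hlam x).trans_lt hb

end MoreauEnvelope

lemma Filter.Tendsto.weakSeqTendsto {H : Type*} [NormedAddCommGroup H] [InnerProductSpace ℝ H]
    {x : ℕ → H} {x₀ : H} (hx : Tendsto x atTop (𝓝 x₀)) : WeakSeqTendsto x x₀ :=
  fun _ => ((continuous_id.inner continuous_const).tendsto x₀).comp hx

lemma le_of_frequently_moreauEnvelope_le {X : Type*} [NormedAddCommGroup X]
    [InnerProductSpace ℝ X] [CompleteSpace X] {f : X → ℝ} (hf : ConvexOn ℝ univ f)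
    (hfc : Continuous f) {lam : ℕ → ℝ} (hlam : ∀ k, 0 < lam k)
    (hlam₀ : Tendsto lam atTop (𝓝 0)) {w : ℕ → X} {w₀ : X} (hw : WeakSeqTendsto w w₀)
    {b : ℕ → ℝ} {b₀ : ℝ} (hb : Tendsto b atTop (𝓝 b₀))
    (hfreq : ∃ᶠ k in atTop, moreauEnvelope f (lam k) (w k) ≤ b k) : f w₀ ≤ b₀ := by
  obtain ⟨l, c, hlc⟩ := hf.exists_affine_le hfc
  have hμ : ∀ μ > 0, moreauEnvelope f μ w₀ ≤ b₀ := fun μ hμ =>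
    (moreauEnvelope_convexOn hf hlc hμ).le_of_weakSeqTendsto
      (moreauEnvelope_continuous hf hfc hlc hμ) hw hb <|
      (hfreq.and_eventually (hlam₀.eventually (eventually_le_nhds hμ))).mono
        fun k hk => (moreauEnvelope_anti hlc (hlam k) hk.2 _).trans hk.1
  exact le_of_tendsto (tendsto_moreauEnvelope hfc.continuousAt hlc)
    (eventually_nhdsWithin_of_forall hμ)

lemma le_measure_of_forall_le_measure_moreauEnvelope_le {H E Ω : Type*} [NormedAddCommGroup H]
    [InnerProductSpace ℝ H] [CompleteSpace H] [NormedAddCommGroup E] [InnerProductSpace ℝ E]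
    [CompleteSpace E] [MeasurableSpace E] [OpensMeasurableSpace E] [MeasurableSpace Ω]
    {P : Measure Ω} [IsFiniteMeasure P] {ξ : Ω → E} (hξ : Measurable ξ)
    {f : WithLp 2 (H × E) → ℝ} (hf : ConvexOn ℝ univ f) (hfc : Continuous f)
    {lam : ℕ → ℝ} (hlam : ∀ k, 0 < lam k) (hlam₀ : Tendsto lam atTop (𝓝 0))
    {x : ℕ → H} {x₀ : H} (hx : WeakSeqTendsto x x₀) {b : ℕ → ℝ} {b₀ : ℝ}
    (hb : Tendsto b atTop (𝓝 b₀)) {a : ENNReal}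
    (ha : ∀ k, a ≤ P {ω | moreauEnvelope f (lam k) (WithLp.toLp 2 (x k, ξ ω)) ≤ b k}) :
    a ≤ P {ω | f (WithLp.toLp 2 (x₀, ξ ω)) ≤ b₀} := by
  obtain ⟨l, c, hlc⟩ := hf.exists_affine_le hfc
  have hmeas : ∀ k, MeasurableSet {ω | moreauEnvelope f (lam k) (WithLp.toLp 2 (x k, ξ ω)) ≤ b k} :=
    fun k => hξ <| IsClosed.measurableSet <| isClosed_le
      ((moreauEnvelope_continuous hf hfc hlc (hlam k)).comp
        ((WithLp.prod_continuous_toLp 2 H E).comp (Continuous.prodMk_right (x k))))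
      continuous_const
  refine (le_measure_limsup_atTop hmeas ha).trans (measure_mono fun ω hω => ?_)
  exact le_of_frequently_moreauEnvelope_le hf hfc hlam hlam₀ (hx.toLp_prod_const (ξ ω)) hb
    (mem_limsup_iff_frequently_mem.1 hω)

lemma WeakDual.exists_norm_le_of_isCompact {𝕜 Y : Type*} [NontriviallyNormedField 𝕜]
    [NormedAddCommGroup Y] [NormedSpace 𝕜 Y] [CompleteSpace Y] {C : Set (WeakDual 𝕜 Y)}
    (hC : IsCompact C) : ∃ M, ∀ v ∈ C, ‖WeakDual.toStrongDual v‖ ≤ M := by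
  obtain ⟨M, hM⟩ := banach_steinhaus (g := fun v : C => WeakDual.toStrongDual (v : WeakDual 𝕜 Y))
    fun y => by
      obtain ⟨B, hB⟩ := (hC.image (WeakDual.eval_continuous y).norm).bddAbove
      exact ⟨B, fun v => hB (mem_image_of_mem _ v.2)⟩
  exact ⟨M, fun v hv => hM ⟨v, hv⟩⟩

lemma convexOn_continuous_iSup_weakDual {W Y : Type*} [NormedAddCommGroup W] [NormedSpace ℝ W]
    [NormedAddCommGroup Y] [NormedSpace ℝ Y] [CompleteSpace Y] {C : Set (WeakDual ℝ Y)}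
    [Nonempty C] (hC : IsCompact C) {G : W → Y} (hG : Continuous G) {g : W → ℝ}
    (hg : Continuous g) (hconv : ∀ v ∈ C, ConvexOn ℝ univ fun w => v (G w) + g w) :
    ConvexOn ℝ univ (fun w => ⨆ v : C, (v : WeakDual ℝ Y) (G w) + g w) ∧
      Continuous (fun w => ⨆ v : C, (v : WeakDual ℝ Y) (G w) + g w) := by
  obtain ⟨M, hM⟩ := WeakDual.exists_norm_le_of_isCompact hC
  have hle : ∀ w, ∀ v : C, (v : WeakDual ℝ Y) (G w) + g w ≤ M * ‖G w‖ + g w := fun w v => by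
    have hv : (v : WeakDual ℝ Y) (G w) ≤ ‖WeakDual.toStrongDual (v : WeakDual ℝ Y)‖ * ‖G w‖ :=
      (Real.le_norm_self _).trans ((WeakDual.toStrongDual (v : WeakDual ℝ Y)).le_opNorm (G w))
    nlinarith [mul_le_mul_of_nonneg_right (hM v v.2) (norm_nonneg (G w))]
  have hbdd : ∀ w, BddAbove (range fun v : C => (v : WeakDual ℝ Y) (G w) + g w) :=
    fun w => ⟨_, forall_mem_range.2 (hle w)⟩
  have hconv' := convexOn_ciSup (fun v : C => hconv v v.2) (fun w _ => hbdd w) convex_univ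
  exact ⟨hconv', hconv'.continuous_of_le (continuous_const.mul hG.norm |>.add hg)
    fun w => ciSup_le (hle w)⟩

lemma moreauEnv2_eq_moreauEnvelope {H E : Type*} [NormedAddCommGroup H] [InnerProductSpace ℝ H]
    [NormedAddCommGroup E] [InnerProductSpace ℝ E] (S : H → E → ℝ) (lam : ℝ) (x : H) (z : E) :
    moreauEnv2 S lam x z = moreauEnvelope (fun w : WithLp 2 (H × E) => S w.fst w.snd) lam
      (WithLp.toLp 2 (x, z)) := by
  rw [moreauEnv2, moreauEnvelope, ← (WithLp.equiv 2 (H × E)).symm.iInf_comp]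
  congr 1
  ext u
  simp [WithLp.prod_norm_sq_eq_of_L2]

theorem stmt13_general
    {H Y : Type*} [NormedAddCommGroup H] [InnerProductSpace ℝ H] [CompleteSpace H]
    [NormedAddCommGroup Y] [NormedSpace ℝ Y] [CompleteSpace Y] {m : ℕ}
    {Ω : Type*} [MeasurableSpace Ω] (P : Measure Ω) [IsProbabilityMeasure P]
    (ξ : Ω → EuclideanSpace ℝ (Fin m)) (hξ : Measurable ξ)
    (C : Set (WeakDual ℝ Y)) (hCne : C.Nonempty) (hCcpt : IsCompact C)
    (Φ : H → EuclideanSpace ℝ (Fin m) → Y)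
    (hΦ : Continuous fun q : H × EuclideanSpace ℝ (Fin m) => Φ q.1 q.2)
    (h : H → ℝ) (hC1 : ContDiff ℝ 1 h)
    (hscal : ∀ v ∈ C, ConvexOn ℝ Set.univ
      (fun q : H × EuclideanSpace ℝ (Fin m) => v (Φ q.1 q.2) + h q.1))
    (S : H → EuclideanSpace ℝ (Fin m) → ℝ)
    (hS : ∀ x z, S x z = ⨆ v : C, ((v : WeakDual ℝ Y) (Φ x z) + h x))
    (φ : H → ℝ)
    (hφ : ∀ x, φ x = (P {ω | S x (ξ ω) ≤ h x}).toReal)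
    (φl : ℝ → H → ℝ)
    (hφl : ∀ lam x, φl lam x = (P {ω | moreauEnv2 S lam x (ξ ω) ≤ h x}).toReal)
    (p : ℝ)
    (Mp : Set H) (hMp : Mp = {x | p ≤ φ x})
    (Ml : ℝ → Set H) (hMl : ∀ lam, Ml lam = {x | p ≤ φl lam x}) :
    (∀ lam : ℕ → ℝ, (∀ k, 0 < lam k) → Tendsto lam atTop (𝓝 0) →
      (∀ k, Mp ⊆ Ml (lam k)) ∧
      (∀ (x : ℕ → H) (x₀ : H), (∀ k, x k ∈ Ml (lam k)) → Tendsto x atTop (𝓝 x₀) →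
        x₀ ∈ Mp)) ∧
    ((∀ (x : ℕ → H) (x₀ : H), WeakSeqTendsto x x₀ →
        Tendsto (fun k => h (x k)) atTop (𝓝 (h x₀))) →
      ∀ lam : ℕ → ℝ, (∀ k, 0 < lam k) → Tendsto lam atTop (𝓝 0) →
      ∀ (x : ℕ → H) (x₀ : H), (∀ k, x k ∈ Ml (lam k)) → WeakSeqTendsto x x₀ →
        x₀ ∈ Mp) := by
  have : Nonempty C := hCne.to_subtype
  set f : WithLp 2 (H × EuclideanSpace ℝ (Fin m)) → ℝ := fun w => S w.fst w.snd
  obtain ⟨hf, hfc⟩ : ConvexOn ℝ univ f ∧ Continuous f := by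
    simp only [f, hS]
    exact convexOn_continuous_iSup_weakDual hCcpt (hΦ.comp (WithLp.prod_continuous_ofLp 2 _ _))
      (hC1.continuous.comp (WithLp.continuous_fst 2 _ _))
      fun v hv => (hscal v hv).comp_linearMap (WithLp.linearEquiv 2 ℝ _).toLinearMap
  have hMl' : ∀ lam x, x ∈ Ml lam ↔ ENNReal.ofReal p ≤
      P {ω | moreauEnvelope f lam (WithLp.toLp 2 (x, ξ ω)) ≤ h x} := fun lam x => by
    simp only [hMl, hφl, moreauEnv2_eq_moreauEnvelope, mem_ofPred_eq, f]
    exact (ENNReal.ofReal_le_iff_le_toReal (measure_ne_top P _)).symm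
  have hMp' : ∀ x, x ∈ Mp ↔ ENNReal.ofReal p ≤ P {ω | f (WithLp.toLp 2 (x, ξ ω)) ≤ h x} :=
    fun x => by
      simp only [hMp, hφ, mem_ofPred_eq, f]
      exact (ENNReal.ofReal_le_iff_le_toReal (measure_ne_top P _)).symm
  have hlimit : ∀ lam : ℕ → ℝ, (∀ k, 0 < lam k) → Tendsto lam atTop (𝓝 0) →
      ∀ (x : ℕ → H) (x₀ : H), (∀ k, x k ∈ Ml (lam k)) → WeakSeqTendsto x x₀ →
      Tendsto (fun k => h (x k)) atTop (𝓝 (h x₀)) → x₀ ∈ Mp :=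
    fun lam hlam hlam₀ x x₀ hx hw hh => (hMp' x₀).2 <|
      le_measure_of_forall_le_measure_moreauEnvelope_le hξ hf hfc hlam hlam₀ hw hh
        fun k => (hMl' _ _).1 (hx k)
  obtain ⟨l, c, hlc⟩ := hf.exists_affine_le hfc
  refine ⟨fun lam hlam hlam₀ => ⟨fun k x hx => ?_, fun x x₀ hx hx₀ => ?_⟩,
    fun hweak lam hlam hlam₀ x x₀ hx hx₀ => hlimit lam hlam hlam₀ x x₀ hx hx₀ (hweak x x₀ hx₀)⟩
  · exact (hMl' _ x).2 <| ((hMp' x).1 hx).trans <| measure_mono fun ω hω =>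
      (moreauEnvelope_le_self hlc (hlam k) _).trans hω
  · exact hlimit lam hlam hlam₀ x x₀ hx hx₀.weakSeqTendsto
      ((hC1.continuous.tendsto x₀).comp hx₀)

/-- Proposition 5.1: Painlevé–Kuratowski convergence of the regularized feasible sets
`M_λ(p) = {x | φ_λ(x) ≥ p}` to `M(p) = {x | φ(x) ≥ p}` as `λ → 0⁺`, and, when `h` is
sequentially weakly continuous, Mosco convergence. -/
theorem stmt13
    {H Y : Type*} [NormedAddCommGroup H] [InnerProductSpace ℝ H] [CompleteSpace H]
    [SecondCountableTopology H]
    [NormedAddCommGroup Y] [NormedSpace ℝ Y] [CompleteSpace Y] {m : ℕ}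
    {Ω : Type*} [MeasurableSpace Ω] (P : Measure Ω) [IsProbabilityMeasure P]
    (ξ : Ω → EuclideanSpace ℝ (Fin m)) (hξ : Measurable ξ)
    (hlaw : P.map ξ ≪ volume)
    (K : Set Y) (hKne : K.Nonempty) (hKcl : IsClosed K) (hKconv : Convex ℝ K)
    (hKcone : ∀ c : ℝ, 0 ≤ c → ∀ y ∈ K, c • y ∈ K)
    (C : Set (WeakDual ℝ Y)) (hCne : C.Nonempty) (hCconv : Convex ℝ C) (hCcpt : IsCompact C)
    (hCgen : closure {w : WeakDual ℝ Y | ∃ c : ℝ, 0 ≤ c ∧ ∃ v ∈ C, w = c • v}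
      = {w : WeakDual ℝ Y | ∀ y ∈ K, 0 ≤ w y})
    (Φ : H → EuclideanSpace ℝ (Fin m) → Y)
    (hΦ : Continuous fun q : H × EuclideanSpace ℝ (Fin m) => Φ q.1 q.2)
    (h : H → ℝ) (hconv : ConvexOn ℝ Set.univ h) (hC1 : ContDiff ℝ 1 h)
    (hscal : ∀ v ∈ C, ConvexOn ℝ Set.univ
      (fun q : H × EuclideanSpace ℝ (Fin m) => v (Φ q.1 q.2) + h q.1))
    (S : H → EuclideanSpace ℝ (Fin m) → ℝ)
    (hS : ∀ x z, S x z = ⨆ v : C, ((v : WeakDual ℝ Y) (Φ x z) + h x))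
    (φ : H → ℝ)
    (hφ : ∀ x, φ x = (P {ω | S x (ξ ω) ≤ h x}).toReal)
    (φl : ℝ → H → ℝ)
    (hφl : ∀ lam x, φl lam x = (P {ω | moreauEnv2 S lam x (ξ ω) ≤ h x}).toReal)
    (p : ℝ) (hp : p ∈ Set.Icc (0 : ℝ) 1)
    (Mp : Set H) (hMp : Mp = {x | p ≤ φ x})
    (Ml : ℝ → Set H) (hMl : ∀ lam, Ml lam = {x | p ≤ φl lam x}) :
    (∀ lam : ℕ → ℝ, (∀ k, 0 < lam k) → Tendsto lam atTop (𝓝 0) →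
      (∀ k, Mp ⊆ Ml (lam k)) ∧
      (∀ (x : ℕ → H) (x₀ : H), (∀ k, x k ∈ Ml (lam k)) → Tendsto x atTop (𝓝 x₀) →
        x₀ ∈ Mp)) ∧
    ((∀ (x : ℕ → H) (x₀ : H), WeakSeqTendsto x x₀ →
        Tendsto (fun k => h (x k)) atTop (𝓝 (h x₀))) →
      ∀ lam : ℕ → ℝ, (∀ k, 0 < lam k) → Tendsto lam atTop (𝓝 0) →
      ∀ (x : ℕ → H) (x₀ : H), (∀ k, x k ∈ Ml (lam k)) → WeakSeqTendsto x x₀ →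
        x₀ ∈ Mp) :=
  stmt13_general P ξ hξ C hCne hCcpt Φ hΦ h hC1 hscal S hS φ hφ φl hφl p Mp hMp Ml hMl
end

section
/- Let H = ℝⁿ, let (Ω,𝓕,ℙ) be a probability space, ξ : Ω → ℝ^m a measurable random vector, S : ℝⁿ × ℝ^m → ℝ convex and continuous, and h : ℝⁿ → ℝ convex and continuously differentiable. For λ > 0 set φ_λ(x) := ℙ(M_λS(x,ξ) ≤ h(x)) and M_λ(p) := {x : φ_λ(x) ≥ p}, and for ε > 0 set φ^ε(x) := ℙ(S(x,ξ) ≤ h(x) + ε) and M^ε(p) := {x : φ^ε(x) ≥ p}. Let ε, η > 0 and let C ⊆ ℝⁿ be a bounded, closed, convex set. Then there exists λ₀ > 0 such that for all p ∈ ℝ and all λ ∈ (0, λ₀): M_λ(p) ∩ C ⊆ M^ε(p − η). If, in addition, the law of ξ has bounded support, then M_λ(p) ∩ C ⊆ M^ε(p). (Proposition 5.2.) -/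
open Filter Topology MeasureTheory

open Metric

set_option maxHeartbeats 1000000 in
/-- Key uniform estimate: on a bounded set of `(x, z)` and for small `λ`,
`M_λS(x,z) ≤ h(x)` forces `S(x,z) ≤ h(x) + ε`. -/
lemma key_est_aux {n m : ℕ}
    (S : EuclideanSpace ℝ (Fin n) → EuclideanSpace ℝ (Fin m) → ℝ)
    (hSconv : ConvexOn ℝ Set.univ
      fun q : EuclideanSpace ℝ (Fin n) × EuclideanSpace ℝ (Fin m) => S q.1 q.2)
    (hScont : Continuous
      fun q : EuclideanSpace ℝ (Fin n) × EuclideanSpace ℝ (Fin m) => S q.1 q.2)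
    (h : EuclideanSpace ℝ (Fin n) → ℝ)
    (ε : ℝ) (hε : 0 < ε)
    (Cset : Set (EuclideanSpace ℝ (Fin n)))
    (hCb : Bornology.IsBounded Cset) (hCcl : IsClosed Cset)
    (r : ℝ) :
    ∃ lam₀ > (0:ℝ), ∀ x ∈ Cset, ∀ lam ∈ Set.Ioo (0:ℝ) lam₀,
      ∀ z, ‖z‖ ≤ r → moreauEnv2 S lam x z ≤ h x → S x z ≤ h x + ε := by
  set K : Set (EuclideanSpace ℝ (Fin n) × EuclideanSpace ℝ (Fin m)) :=
    Cset ×ˢ Metric.closedBall 0 r with hK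
  have hKcomp : IsCompact K :=
    (isCompact_of_isClosed_isBounded hCcl hCb).prod (isCompact_closedBall 0 r)
  have hK1comp : IsCompact (cthickening 1 K) := hKcomp.cthickening
  obtain ⟨B, hB⟩ := hK1comp.exists_bound_of_continuousOn hScont.continuousOn
  set L : ℝ := max B 0 with hLdef
  have hL0 : 0 ≤ L := le_max_right _ _
  have hLbd : ∀ q ∈ cthickening 1 K, |S q.1 q.2| ≤ L := fun q hq =>
    (hB q hq).trans (le_max_left _ _)
  refine ⟨ε / (2 * L ^ 2 + 1), by positivity, ?_⟩
  intro x hx lam hlam z hz hM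
  have hlam0 : 0 < lam := hlam.1
  set w : EuclideanSpace ℝ (Fin n) × EuclideanSpace ℝ (Fin m) := (x, z) with hw
  have hwK : w ∈ K := Set.mk_mem_prod hx (by simpa using hz)
  have hwK1 : w ∈ cthickening 1 K := self_subset_cthickening K hwK
  have hSw : |S x z| ≤ L := hLbd w hwK1
  -- lower bound on each term of the infimum
  have hlow : ∀ u : EuclideanSpace ℝ (Fin n) × EuclideanSpace ℝ (Fin m),
      S x z - lam * (2 * L) ^ 2 / 2 ≤
        S u.1 u.2 + (‖x - u.1‖ ^ 2 + ‖z - u.2‖ ^ 2) / (2 * lam) := by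
    intro u
    set d : ℝ := ‖w - u‖ with hd
    have hd0 : 0 ≤ d := norm_nonneg _
    -- Step 1: S u ≥ S w - 2 L d
    have step1 : S x z - 2 * L * d ≤ S u.1 u.2 := by
      rcases eq_or_lt_of_le hd0 with hde | hdp
      · have hwu : w = u := by
          have h0 : w - u = 0 := by rw [← norm_eq_zero]; exact hde.symm
          exact sub_eq_zero.mp h0
        have : S u.1 u.2 = S x z := by rw [← hwu]
        rw [this, ← hde]
        nlinarith
      · set v : EuclideanSpace ℝ (Fin n) × EuclideanSpace ℝ (Fin m) :=
          w + d⁻¹ • (w - u) with hv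
        have hvK1 : v ∈ cthickening 1 K := by
          refine mem_cthickening_of_dist_le v w 1 K hwK ?_
          rw [dist_eq_norm]
          have : v - w = d⁻¹ • (w - u) := by rw [hv]; abel
          rw [this, norm_smul, norm_inv, Real.norm_eq_abs, abs_of_pos hdp, ← hd,
            inv_mul_cancel₀ (ne_of_gt hdp)]
        have ha : (0:ℝ) ≤ 1 / (d + 1) := by positivity
        have hb : (0:ℝ) ≤ d / (d + 1) := by positivity
        have hab : 1 / (d + 1) + d / (d + 1) = (1:ℝ) := by field_simp; try ring
        have hconv := hSconv.2 (Set.mem_univ u) (Set.mem_univ v) ha hb hab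
        have hcomb : (1 / (d + 1)) • u + (d / (d + 1)) • v = w := by
          rw [hv]
          have hd1 : d + 1 ≠ 0 := by positivity
          have hdne : d ≠ 0 := ne_of_gt hdp
          match_scalars <;> field_simp <;> ring
        rw [hcomb] at hconv
        have hSv : |S v.1 v.2| ≤ L := hLbd v hvK1
        have h1 : S x z ≤ (1/(d+1)) * S u.1 u.2 + (d/(d+1)) * S v.1 v.2 := hconv
        have hd1 : (0:ℝ) < d + 1 := by linarith
        have h2 : S x z * (d + 1) ≤ S u.1 u.2 + d * S v.1 v.2 := by
          rw [← le_div_iff₀ hd1]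
          calc S x z ≤ 1/(d+1) * S u.1 u.2 + d/(d+1) * S v.1 v.2 := h1
          _ = (S u.1 u.2 + d * S v.1 v.2)/(d+1) := by ring
        have h3 : d * S v.1 v.2 ≤ d * L :=
          mul_le_mul_of_nonneg_left (abs_le.mp hSv).2 hd0
        have h4 : d * (-L) ≤ d * S x z :=
          mul_le_mul_of_nonneg_left (abs_le.mp hSw).1 hd0
        nlinarith
    -- Step 2: d^2 ≤ sum of squares
    have step2 : d ^ 2 ≤ ‖x - u.1‖ ^ 2 + ‖z - u.2‖ ^ 2 := by
      have : d = max ‖x - u.1‖ ‖z - u.2‖ := by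
        rw [hd, Prod.norm_def]; rfl
      rw [this]
      rcases max_cases ‖x - u.1‖ ‖z - u.2‖ with ⟨hm, _⟩ | ⟨hm, _⟩ <;> rw [hm] <;>
        nlinarith [norm_nonneg (x - u.1), norm_nonneg (z - u.2), sq_nonneg ‖x - u.1‖,
          sq_nonneg ‖z - u.2‖]
    have hq : d ^ 2 / (2 * lam) ≤ (‖x - u.1‖ ^ 2 + ‖z - u.2‖ ^ 2) / (2 * lam) := by
      gcongr
    have hkey : 2 * L * d - lam * (2 * L) ^ 2 / 2 ≤ d ^ 2 / (2 * lam) := by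
      rw [le_div_iff₀ (by positivity)]
      nlinarith [sq_nonneg (d - 2 * L * lam)]
    linarith
  have hmain : S x z - lam * (2 * L) ^ 2 / 2 ≤ moreauEnv2 S lam x z := by
    rw [moreauEnv2]
    exact le_ciInf hlow
  have hlamlt : lam < ε / (2 * L ^ 2 + 1) := hlam.2
  have hL2 : (0:ℝ) < 2 * L ^ 2 + 1 := by positivity
  have h1 : lam * (2 * L ^ 2 + 1) < ε := (lt_div_iff₀ hL2).mp hlamlt
  have h2 : lam * (2 * L) ^ 2 / 2 ≤ ε := by nlinarith
  linarith [hmain.trans hM]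

/-- A random vector has small tails: for every `η > 0` there is `r > 0` with
`P(‖ξ‖ > r) ≤ η`. -/
lemma tail_small_aux {m : ℕ} {Ω : Type*} [MeasurableSpace Ω]
    (P : Measure Ω) [IsProbabilityMeasure P]
    (ξ : Ω → EuclideanSpace ℝ (Fin m)) (hξ : Measurable ξ)
    (η : ℝ) (hη : 0 < η) :
    ∃ r > (0:ℝ), P {ω | r < ‖ξ ω‖} ≤ ENNReal.ofReal η := by
  set s : ℕ → Set Ω := fun k => {ω | (k:ℝ) < ‖ξ ω‖} with hs
  have hmeas : ∀ k, MeasurableSet (s k) := fun k =>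
    measurableSet_lt measurable_const hξ.norm
  have hanti : Antitone s := by
    intro a b hab ω hω
    simp only [hs, Set.mem_setOf_eq] at hω ⊢
    exact lt_of_le_of_lt (Nat.cast_le.mpr hab) hω
  have hempty : ⋂ k, s k = ∅ := by
    ext ω
    simp only [Set.mem_iInter, Set.mem_empty_iff_false, iff_false, not_forall]
    obtain ⟨k, hk⟩ := exists_nat_gt ‖ξ ω‖
    exact ⟨k, by simp [hs, not_lt.mpr hk.le]⟩
  have htend := MeasureTheory.tendsto_measure_iInter_atTop
    (fun k => (hmeas k).nullMeasurableSet) hanti ⟨0, measure_ne_top P _⟩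
  rw [hempty, measure_empty] at htend
  have hev : ∀ᶠ k in atTop, P (s k) < ENNReal.ofReal η :=
    htend.eventually_lt_const (by simp [hη])
  obtain ⟨k, hk⟩ := hev.exists
  refine ⟨(k:ℝ) + 1, by positivity, ?_⟩
  refine le_trans (measure_mono ?_) hk.le
  intro ω hω
  simp only [hs, Set.mem_setOf_eq] at hω ⊢
  linarith

/-- Proposition 5.2: with `φ_λ(x) = ℙ(M_λS(x,ξ) ≤ h(x))`, `M_λ(p) = {x | φ_λ(x) ≥ p}`,
`φ^ε(x) = ℙ(S(x,ξ) ≤ h(x)+ε)` and `M^ε(p) = {x | φ^ε(x) ≥ p}`, for any `ε, η > 0` and any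
bounded closed convex `C ⊆ ℝⁿ` there is `λ₀ > 0` such that `M_λ(p) ∩ C ⊆ M^ε(p − η)` for
all `p ∈ ℝ` and `λ ∈ (0,λ₀)`; and if the law of `ξ` has bounded support, then also
`M_λ(p) ∩ C ⊆ M^ε(p)`. -/
theorem stmt14 {n m : ℕ} {Ω : Type*} [MeasurableSpace Ω]
    (P : Measure Ω) [IsProbabilityMeasure P]
    (ξ : Ω → EuclideanSpace ℝ (Fin m)) (hξ : Measurable ξ)
    (S : EuclideanSpace ℝ (Fin n) → EuclideanSpace ℝ (Fin m) → ℝ)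
    (hSconv : ConvexOn ℝ Set.univ
      fun q : EuclideanSpace ℝ (Fin n) × EuclideanSpace ℝ (Fin m) => S q.1 q.2)
    (hScont : Continuous
      fun q : EuclideanSpace ℝ (Fin n) × EuclideanSpace ℝ (Fin m) => S q.1 q.2)
    (h : EuclideanSpace ℝ (Fin n) → ℝ) (hconv : ConvexOn ℝ Set.univ h)
    (hC1 : ContDiff ℝ 1 h)
    (φl : ℝ → EuclideanSpace ℝ (Fin n) → ℝ)
    (hφl : ∀ lam x, φl lam x = (P {ω | moreauEnv2 S lam x (ξ ω) ≤ h x}).toReal)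
    (Ml : ℝ → ℝ → Set (EuclideanSpace ℝ (Fin n)))
    (hMl : ∀ lam p, Ml lam p = {x | p ≤ φl lam x})
    (φe : ℝ → EuclideanSpace ℝ (Fin n) → ℝ)
    (hφe : ∀ ε x, φe ε x = (P {ω | S x (ξ ω) ≤ h x + ε}).toReal)
    (Me : ℝ → ℝ → Set (EuclideanSpace ℝ (Fin n)))
    (hMe : ∀ ε p, Me ε p = {x | p ≤ φe ε x})
    (ε η : ℝ) (hε : 0 < ε) (hη : 0 < η)
    (Cset : Set (EuclideanSpace ℝ (Fin n)))
    (hCb : Bornology.IsBounded Cset) (hCcl : IsClosed Cset) (hCconv : Convex ℝ Cset) :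
    ∃ lam₀ > (0 : ℝ),
      (∀ p : ℝ, ∀ lam ∈ Set.Ioo (0 : ℝ) lam₀, Ml lam p ∩ Cset ⊆ Me ε (p - η)) ∧
      ((∃ r > (0 : ℝ), P {ω | r < ‖ξ ω‖} = 0) →
        ∀ p : ℝ, ∀ lam ∈ Set.Ioo (0 : ℝ) lam₀, Ml lam p ∩ Cset ⊆ Me ε p) := by
  by_cases hQ : ∃ r > (0:ℝ), P {ω | r < ‖ξ ω‖} = 0
  · -- bounded support: P(‖ξ‖ > rs) = 0, so φ_λ ≤ φ^ε exactly
    obtain ⟨rs, hrs, hnull⟩ := hQ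
    obtain ⟨lam₀, hlam₀, hkey⟩ :=
      key_est_aux S hSconv hScont h ε hε Cset hCb hCcl rs
    have main : ∀ p : ℝ, ∀ lam ∈ Set.Ioo (0:ℝ) lam₀,
        ∀ x ∈ Ml lam p ∩ Cset, p ≤ φe ε x := by
      intro p lam hlam x hxmem
      obtain ⟨hx1, hx2⟩ := hxmem
      rw [hMl] at hx1
      have hx1' : p ≤ φl lam x := hx1
      have hsub : {ω | moreauEnv2 S lam x (ξ ω) ≤ h x} ⊆
          {ω | S x (ξ ω) ≤ h x + ε} ∪ {ω | rs < ‖ξ ω‖} := by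
        intro ω hω
        by_cases hωr : ‖ξ ω‖ ≤ rs
        · exact Or.inl (hkey x hx2 lam hlam (ξ ω) hωr hω)
        · exact Or.inr (not_le.mp hωr)
      have hle : P {ω | moreauEnv2 S lam x (ξ ω) ≤ h x} ≤
          P {ω | S x (ξ ω) ≤ h x + ε} := by
        calc P {ω | moreauEnv2 S lam x (ξ ω) ≤ h x}
            ≤ P ({ω | S x (ξ ω) ≤ h x + ε} ∪ {ω | rs < ‖ξ ω‖}) := measure_mono hsub
          _ ≤ P {ω | S x (ξ ω) ≤ h x + ε} + P {ω | rs < ‖ξ ω‖} := measure_union_le _ _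
          _ = P {ω | S x (ξ ω) ≤ h x + ε} := by rw [hnull, add_zero]
      have hφ : φl lam x ≤ φe ε x := by
        rw [hφl, hφe]
        exact ENNReal.toReal_mono (measure_ne_top P _) hle
      linarith
    refine ⟨lam₀, hlam₀, ?_, ?_⟩
    · intro p lam hlam x hx
      rw [hMe]
      have := main p lam hlam x hx
      show p - η ≤ φe ε x
      linarith
    · intro _ p lam hlam x hx
      rw [hMe]
      exact main p lam hlam x hx
  · -- general case: cut the tail at level η
    obtain ⟨r, hr, htail⟩ := tail_small_aux P ξ hξ η hη
    obtain ⟨lam₀, hlam₀, hkey⟩ :=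
      key_est_aux S hSconv hScont h ε hε Cset hCb hCcl r
    refine ⟨lam₀, hlam₀, ?_, fun hQ' => absurd hQ' hQ⟩
    intro p lam hlam x hxmem
    obtain ⟨hx1, hx2⟩ := hxmem
    rw [hMl] at hx1
    have hx1' : p ≤ φl lam x := hx1
    have hsub : {ω | moreauEnv2 S lam x (ξ ω) ≤ h x} ⊆
        {ω | S x (ξ ω) ≤ h x + ε} ∪ {ω | r < ‖ξ ω‖} := by
      intro ω hω
      by_cases hωr : ‖ξ ω‖ ≤ r
      · exact Or.inl (hkey x hx2 lam hlam (ξ ω) hωr hω)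
      · exact Or.inr (not_le.mp hωr)
    have hle : P {ω | moreauEnv2 S lam x (ξ ω) ≤ h x} ≤
        P {ω | S x (ξ ω) ≤ h x + ε} + P {ω | r < ‖ξ ω‖} :=
      (measure_mono hsub).trans (measure_union_le _ _)
    have htoReal : (P {ω | moreauEnv2 S lam x (ξ ω) ≤ h x}).toReal ≤
        (P {ω | S x (ξ ω) ≤ h x + ε}).toReal + (P {ω | r < ‖ξ ω‖}).toReal := by
      rw [← ENNReal.toReal_add (measure_ne_top P _) (measure_ne_top P _)]
      exact ENNReal.toReal_mono
        (ENNReal.add_ne_top.mpr ⟨measure_ne_top P _, measure_ne_top P _⟩) hle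
    have htailR : (P {ω | r < ‖ξ ω‖}).toReal ≤ η :=
      ENNReal.toReal_le_of_le_ofReal hη.le htail
    rw [hMe]
    show p - η ≤ φe ε x
    have hφ : φl lam x ≤ φe ε x + η := by
      rw [hφl, hφe]
      linarith
    linarith
end

section
/- Let H be a real Hilbert space and g_1, …, g_s : H × ℝ^m → ℝ a family of functions; let Φ : H × ℝ^m → ℝ^s be the vector-valued map Φ(x,z) := (g_1(x,z), …, g_s(x,z)), and let Δ := {w ∈ ℝ^s : w_i ≥ 0 for all i, Σ_i w_i = 1} be the unit simplex. Then the following are equivalent: (a) there exists a convex, continuously differentiable function h : H → ℝ such that for every w ∈ Δ the function (x,z) ↦ ⟨w, Φ(x,z)⟩ + h(x) = Σ_i w_i g_i(x,z) + h(x) is convex on H × ℝ^m; (b) for every i ∈ {1,…,s} there exists a convex, continuously differentiable function h_i : H → ℝ such that (x,z) ↦ g_i(x,z) + h_i(x) is convex on H × ℝ^m. (Proposition 6.1.) -/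
/-! Writing `h := ∑ i, h_i`, each summand of `∑ i, w_i g_i + h` can be regrouped as
`w_i (g_i + h_i) + (1 - w_i) h_i`, a combination of convex functions with nonnegative
coefficients because `0 ≤ w_i ≤ 1` on the simplex. Conversely, a vertex `w = e_i` of the
simplex turns the common `h` into an `h_i`. -/

section ConvexCombination

variable {𝕜 E β ι : Type*} [AddCommMonoid E]

theorem ConvexOn.sum [Semiring 𝕜] [PartialOrder 𝕜] [SMul 𝕜 E] [AddCommMonoid β]
    [PartialOrder β] [IsOrderedAddMonoid β] [Module 𝕜 β] {s : Set E} {t : Finset ι}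
    {f : ι → E → β} (hs : Convex 𝕜 s) (hf : ∀ i ∈ t, ConvexOn 𝕜 s (f i)) :
    ConvexOn 𝕜 s fun x => ∑ i ∈ t, f i x := by
  classical
  induction t using Finset.induction_on with
  | empty => simpa using convexOn_const (0 : β) hs
  | insert a t ha ih =>
    simp only [Finset.sum_insert ha]
    exact (hf a (t.mem_insert_self a)).add (ih fun i hi => hf i (Finset.mem_insert_of_mem hi))

theorem ConvexOn.smul_add_of_le_one [CommRing 𝕜] [PartialOrder 𝕜] [IsOrderedRing 𝕜] [SMul 𝕜 E]
    [AddCommGroup β] [PartialOrder β] [IsOrderedAddMonoid β] [Module 𝕜 β] [PosSMulMono 𝕜 β]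
    {s : Set E} {f h : E → β} (hfh : ConvexOn 𝕜 s fun x => f x + h x) (hh : ConvexOn 𝕜 s h)
    {a : 𝕜} (ha₀ : 0 ≤ a) (ha₁ : a ≤ 1) :
    ConvexOn 𝕜 s fun x => a • f x + h x := by
  have hsplit : (fun x => a • f x + h x) = fun x => a • (f x + h x) + (1 - a) • h x := by
    funext x
    rw [smul_add, sub_smul, one_smul]
    abel
  rw [hsplit]
  exact (hfh.smul ha₀).add (hh.smul (sub_nonneg.mpr ha₁))

theorem ConvexOn.comp_fst [Semiring 𝕜] [PartialOrder 𝕜] [Module 𝕜 E] {F : Type*} [AddCommMonoid F]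
    [Module 𝕜 F] [AddCommMonoid β] [PartialOrder β] [SMul 𝕜 β] {s : Set E} {f : E → β}
    (hf : ConvexOn 𝕜 s f) : ConvexOn 𝕜 (Prod.fst ⁻¹' s) fun q : E × F => f q.1 :=
  hf.comp_linearMap (LinearMap.fst 𝕜 E F)

end ConvexCombination

/-- Proposition 6.1: for `Φ = (g_1, …, g_s)` and the unit simplex `Δ`, the existence of a
single convex `C¹` function `h` making every simplex-scalarization
`(x,z) ↦ Σ_i w_i g_i(x,z) + h(x)` (`w ∈ Δ`) convex is equivalent to the existence, for
each `i`, of a convex `C¹` function `h_i` making `(x,z) ↦ g_i(x,z) + h_i(x)` convex. -/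
theorem stmt17 {H : Type*} [NormedAddCommGroup H] [InnerProductSpace ℝ H] {m s : ℕ}
    (g : Fin s → H × EuclideanSpace ℝ (Fin m) → ℝ) :
    (∃ h : H → ℝ, ConvexOn ℝ Set.univ h ∧ ContDiff ℝ 1 h ∧
      ∀ w : Fin s → ℝ, (∀ i, 0 ≤ w i) → (∑ i, w i) = 1 →
        ConvexOn ℝ Set.univ
          (fun q : H × EuclideanSpace ℝ (Fin m) => (∑ i, w i * g i q) + h q.1)) ↔
    (∀ i : Fin s, ∃ hi : H → ℝ, ConvexOn ℝ Set.univ hi ∧ ContDiff ℝ 1 hi ∧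
      ConvexOn ℝ Set.univ (fun q : H × EuclideanSpace ℝ (Fin m) => g i q + hi q.1)) := by
  constructor
  · rintro ⟨h, hconv, hC1, hscal⟩ i
    refine ⟨h, hconv, hC1, ?_⟩
    have hvertex : 0 ≤ (Pi.single i 1 : Fin s → ℝ) := by simp
    simpa [Pi.single_apply, ite_mul] using hscal (Pi.single i 1) hvertex (by simp)
  · intro hind
    choose hi hiconv hiC1 hig using hind
    refine ⟨fun x => ∑ i, hi i x, ConvexOn.sum convex_univ fun i _ => hiconv i,
      ContDiff.sum fun i _ => hiC1 i, fun w hw hw1 => ?_⟩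
    have hw_le_one (i : Fin s) : w i ≤ 1 :=
      hw1 ▸ Finset.single_le_sum (fun j _ => hw j) (Finset.mem_univ i)
    have hterm (i : Fin s) : ConvexOn ℝ Set.univ
        fun q : H × EuclideanSpace ℝ (Fin m) => w i * g i q + hi i q.1 :=
      (hig i).smul_add_of_le_one (by simpa using (hiconv i).comp_fst) (hw i) (hw_le_one i)
    simpa only [Finset.sum_add_distrib] using ConvexOn.sum convex_univ fun i _ => hterm i
end
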